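/- arXiv:2509.06138 — 3 statements merged into one kernel-verified Lean document; each statement's English description precedes it below -/
import Mathlib

section
/- For 1 < p < N_γ, p ≠ N_γ, the function Γ_p(z) = d(z)^{(p−N_γ)/(p−1)} satisfies Δ_{γ,p} Γ_p = 0 pointwise on ℝ^N ∖ {0}, where d is the Grushin gauge. -/
/-!
Write `S = d^{2(γ+1)} = |x|^{2(γ+1)} + (γ+1)²|y|²`, which is C¹, and `u = S^b`. Then
`∇_γ u = 2(γ+1) b S^{b-1} (|x|^{2γ} x, (γ+1) |x|^γ y)` and `|∇_γ u| = |2(γ+1)b| S^{b-1/2} |x|^γ`,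
so up to a constant the flux `|∇_γ u|^{p-2} ∇_γ u` is `(S^a |x|^{γp} x, (γ+1) S^a |x|^{γ(p-1)} y)`
with `a = b(p-1) - p/2`. Euler's identity `∑ ∂_{x_i}(φ x_i) = m φ + x · ∇_x φ` (and its analogue in
`y`) gives `Δ_{γ,p} u = c S^a |x|^{γp} (m + (1+γ)n - p + 2(γ+1)(p-1) b)`, and
`d^{(p-N_γ)/(p-1)} = S^b` with `2(γ+1)(p-1) b = p - N_γ`.
-/

open MeasureTheory Real Filter Topology

noncomputable section

abbrev Esp (k : ℕ) := EuclideanSpace ℝ (Fin k)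

def ggauge (γ : ℝ) {m n : ℕ} (z : Esp m × Esp n) : ℝ :=
  (‖z.1‖ ^ (2 * (γ + 1)) + (γ + 1) ^ 2 * ‖z.2‖ ^ 2) ^ (1 / (2 * (γ + 1)))

def dil (γ ρ : ℝ) {m n : ℕ} (z : Esp m × Esp n) : Esp m × Esp n :=
  (ρ • z.1, (ρ ^ (γ + 1)) • z.2)

def toE {ι : Type*} (f : ι → ℝ) : EuclideanSpace ℝ ι := WithLp.toLp 2 f

def Xop (γ : ℝ) {m n : ℕ} (i : Fin m ⊕ Fin n) (f : Esp m × Esp n → ℝ)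
    (z : Esp m × Esp n) : ℝ :=
  match i with
  | Sum.inl i => fderiv ℝ f z (EuclideanSpace.single i 1, 0)
  | Sum.inr j => ‖z.1‖ ^ γ * fderiv ℝ f z (0, EuclideanSpace.single j 1)

def ggrad (γ : ℝ) {m n : ℕ} (u : Esp m × Esp n → ℝ) (z : Esp m × Esp n) :
    EuclideanSpace ℝ (Fin m ⊕ Fin n) :=
  toE fun i => Xop γ i u z

def pLap (γ p : ℝ) {m n : ℕ} (u : Esp m × Esp n → ℝ) (z : Esp m × Esp n) : ℝ :=
  ∑ i : Fin m ⊕ Fin n, Xop γ i (fun w => ‖ggrad γ u w‖ ^ (p - 2) * Xop γ i u w) z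

section Calculus

variable {E : Type*} [NormedAddCommGroup E] [NormedSpace ℝ E]

theorem hasFDerivAt_mul_zero_of_tendsto_zero {f g : E → ℝ} {g' : E →L[ℝ] ℝ} {z : E}
    (hf : Tendsto f (𝓝 z) (𝓝 0)) (hg : HasFDerivAt g g' z) (hgz : g z = 0) :
    HasFDerivAt (fun w => f w * g w) (0 : E →L[ℝ] ℝ) z := by
  rw [hasFDerivAt_iff_isLittleO]
  have hf' : f =o[𝓝 z] fun _ => (1 : ℝ) := (Asymptotics.isLittleO_one_iff (F := ℝ)).mpr hf
  have hg' : g =O[𝓝 z] fun w => ‖w - z‖ := by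
    simpa [hgz] using hg.isBigO_sub.norm_right
  simpa [hgz] using (hf'.mul_isBigO hg').norm_right

variable {ι : Type*} [Fintype ι] [DecidableEq ι]

theorem sum_fderiv_mul_fst_apply {φ : EuclideanSpace ℝ ι × E → ℝ}
    {φ' : (EuclideanSpace ℝ ι × E) →L[ℝ] ℝ} {z : EuclideanSpace ℝ ι × E}
    (hφ : HasFDerivAt φ φ' z) :
    ∑ i, fderiv ℝ (fun w => φ w * w.1 i) z (EuclideanSpace.single i 1, 0)
      = Fintype.card ι * φ z + φ' (z.1, 0) := by
  have hcoord (i : ι) : HasFDerivAt (fun w : EuclideanSpace ℝ ι × E => w.1 i)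
      ((EuclideanSpace.proj (𝕜 := ℝ) i).comp (ContinuousLinearMap.fst ℝ _ _)) z :=
    (EuclideanSpace.proj (𝕜 := ℝ) i).hasFDerivAt.comp z hasFDerivAt_fst
  have hsum : ∑ i, z.1 i • ((EuclideanSpace.single i (1 : ℝ), 0) : EuclideanSpace ℝ ι × E)
      = (z.1, 0) := by
    ext1
    · simpa [Prod.fst_sum] using (EuclideanSpace.basisFun ι ℝ).sum_repr z.1
    · simp [Prod.snd_sum]
  rw [← hsum, map_sum]
  simp only [map_smul, smul_eq_mul]
  have hderiv (i : ι) := (hφ.mul (hcoord i)).fderiv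
  simp only [Pi.mul_def] at hderiv
  simp [hderiv, Finset.sum_add_distrib]

theorem sum_fderiv_mul_snd_apply {φ : E × EuclideanSpace ℝ ι → ℝ}
    {φ' : (E × EuclideanSpace ℝ ι) →L[ℝ] ℝ} {z : E × EuclideanSpace ℝ ι}
    (hφ : HasFDerivAt φ φ' z) :
    ∑ i, fderiv ℝ (fun w => φ w * w.2 i) z (0, EuclideanSpace.single i 1)
      = Fintype.card ι * φ z + φ' (0, z.2) := by
  have hcoord (i : ι) : HasFDerivAt (fun w : E × EuclideanSpace ℝ ι => w.2 i)
      ((EuclideanSpace.proj (𝕜 := ℝ) i).comp (ContinuousLinearMap.snd ℝ _ _)) z :=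
    (EuclideanSpace.proj (𝕜 := ℝ) i).hasFDerivAt.comp z hasFDerivAt_snd
  have hsum : ∑ i, z.2 i • ((0, EuclideanSpace.single i (1 : ℝ)) : E × EuclideanSpace ℝ ι)
      = (0, z.2) := by
    ext1
    · simp [Prod.fst_sum]
    · simpa [Prod.snd_sum] using (EuclideanSpace.basisFun ι ℝ).sum_repr z.2
  rw [← hsum, map_sum]
  simp only [map_smul, smul_eq_mul]
  have hderiv (i : ι) := (hφ.mul (hcoord i)).fderiv
  simp only [Pi.mul_def] at hderiv
  simp [hderiv, Finset.sum_add_distrib]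

end Calculus

namespace Grushin

variable {m n : ℕ} {γ : ℝ}

def normSqFst (w : Esp m × Esp n) : ℝ := ‖w.1‖ ^ 2

def normSqSnd (w : Esp m × Esp n) : ℝ := ‖w.2‖ ^ 2

def ggaugeBase (γ : ℝ) (w : Esp m × Esp n) : ℝ :=
  normSqFst w ^ (γ + 1) + (γ + 1) ^ 2 * normSqSnd w

theorem normSqFst_nonneg (w : Esp m × Esp n) : 0 ≤ normSqFst w := sq_nonneg _

theorem ggaugeBase_nonneg (w : Esp m × Esp n) : 0 ≤ ggaugeBase γ w := by
  unfold ggaugeBase normSqSnd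
  have := rpow_nonneg (normSqFst_nonneg w) (γ + 1)
  positivity

theorem ggaugeBase_pos (hγ : γ + 1 ≠ 0) {w : Esp m × Esp n} (hw : w ≠ 0) :
    0 < ggaugeBase γ w := by
  have hx := rpow_nonneg (normSqFst_nonneg w) (γ + 1)
  have hy : 0 ≤ (γ + 1) ^ 2 * normSqSnd w := by unfold normSqSnd; positivity
  unfold ggaugeBase
  rcases eq_or_ne w.1 0 with h1 | h1
  · have h2 : w.2 ≠ 0 := fun h2 => hw (Prod.ext h1 h2)
    have : 0 < (γ + 1) ^ 2 * normSqSnd w := by unfold normSqSnd; positivity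
    linarith
  · have : 0 < normSqFst w ^ (γ + 1) := by unfold normSqFst; positivity
    linarith

theorem norm_fst_rpow (w : Esp m × Esp n) (c : ℝ) : ‖w.1‖ ^ c = normSqFst w ^ (c / 2) := by
  rw [normSqFst, ← rpow_natCast, ← rpow_mul (norm_nonneg _)]
  push_cast
  ring_nf

theorem ggauge_rpow (w : Esp m × Esp n) (c : ℝ) :
    ggauge γ w ^ c = ggaugeBase γ w ^ (c / (2 * (γ + 1))) := by
  have hbase : ggauge γ w = ggaugeBase γ w ^ (1 / (2 * (γ + 1))) := by
    rw [ggauge, norm_fst_rpow, mul_div_cancel_left₀ _ two_ne_zero]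
    rfl
  rw [hbase, ← rpow_mul (ggaugeBase_nonneg w)]
  ring_nf

def normSqFstDeriv (z : Esp m × Esp n) : (Esp m × Esp n) →L[ℝ] ℝ :=
  2 • (innerSL ℝ z.1).comp (ContinuousLinearMap.fst ℝ _ _)

def normSqSndDeriv (z : Esp m × Esp n) : (Esp m × Esp n) →L[ℝ] ℝ :=
  2 • (innerSL ℝ z.2).comp (ContinuousLinearMap.snd ℝ _ _)

def ggaugeBaseDeriv (γ : ℝ) (z : Esp m × Esp n) : (Esp m × Esp n) →L[ℝ] ℝ :=
  ((γ + 1) * normSqFst z ^ γ) • normSqFstDeriv z + (γ + 1) ^ 2 • normSqSndDeriv z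

@[simp]
theorem normSqFstDeriv_apply (z v : Esp m × Esp n) :
    normSqFstDeriv z v = 2 * inner ℝ z.1 v.1 := by
  simp [normSqFstDeriv]

@[simp]
theorem normSqSndDeriv_apply (z v : Esp m × Esp n) :
    normSqSndDeriv z v = 2 * inner ℝ z.2 v.2 := by
  simp [normSqSndDeriv]

@[simp]
theorem ggaugeBaseDeriv_apply (z v : Esp m × Esp n) :
    ggaugeBaseDeriv γ z v = (γ + 1) * normSqFst z ^ γ * (2 * inner ℝ z.1 v.1)
      + (γ + 1) ^ 2 * (2 * inner ℝ z.2 v.2) := by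
  simp [ggaugeBaseDeriv]

theorem hasFDerivAt_normSqFst (z : Esp m × Esp n) :
    HasFDerivAt normSqFst (normSqFstDeriv z) z :=
  (hasFDerivAt_fst (𝕜 := ℝ)).norm_sq

theorem hasFDerivAt_normSqSnd (z : Esp m × Esp n) :
    HasFDerivAt normSqSnd (normSqSndDeriv z) z :=
  (hasFDerivAt_snd (𝕜 := ℝ)).norm_sq

theorem hasFDerivAt_normSqFst_rpow {z : Esp m × Esp n} (hz : z.1 ≠ 0) (e : ℝ) :
    HasFDerivAt (fun w => normSqFst w ^ e) ((e * normSqFst z ^ (e - 1)) • normSqFstDeriv z) z :=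
  (hasFDerivAt_normSqFst z).rpow_const (Or.inl (pow_ne_zero 2 (norm_ne_zero_iff.mpr hz)))

theorem hasFDerivAt_ggaugeBase (hγ : 0 ≤ γ) (z : Esp m × Esp n) :
    HasFDerivAt (ggaugeBase γ) (ggaugeBaseDeriv γ z) z := by
  have hx := (hasFDerivAt_normSqFst z).rpow_const (p := γ + 1) (Or.inr (by linarith))
  simp only [add_sub_cancel_right] at hx
  exact hx.add ((hasFDerivAt_normSqSnd z).const_mul _)

theorem hasFDerivAt_ggaugeBase_rpow (hγ : 0 ≤ γ) {z : Esp m × Esp n} (hz : z ≠ 0) (b : ℝ) :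
    HasFDerivAt (fun w => ggaugeBase γ w ^ b)
      ((b * ggaugeBase γ z ^ (b - 1)) • ggaugeBaseDeriv γ z) z :=
  (hasFDerivAt_ggaugeBase hγ z).rpow_const (Or.inl (ggaugeBase_pos (by linarith) hz).ne')

theorem Xop_inl_ggaugeBase_rpow (hγ : 0 ≤ γ) {w : Esp m × Esp n} (hw : w ≠ 0) (b : ℝ)
    (i : Fin m) :
    Xop γ (.inl i) (fun w => ggaugeBase γ w ^ b) w
      = 2 * (γ + 1) * b * ggaugeBase γ w ^ (b - 1) * normSqFst w ^ γ * w.1 i := by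
  simp only [Xop, (hasFDerivAt_ggaugeBase_rpow hγ hw b).fderiv]
  simp [EuclideanSpace.inner_single_right]
  ring

theorem Xop_inr_ggaugeBase_rpow (hγ : 0 ≤ γ) {w : Esp m × Esp n} (hw : w ≠ 0) (b : ℝ)
    (j : Fin n) :
    Xop γ (.inr j) (fun w => ggaugeBase γ w ^ b) w
      = 2 * (γ + 1) ^ 2 * b * ggaugeBase γ w ^ (b - 1) * normSqFst w ^ (γ / 2) * w.2 j := by
  simp only [Xop, (hasFDerivAt_ggaugeBase_rpow hγ hw b).fderiv, norm_fst_rpow]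
  simp [EuclideanSpace.inner_single_right]
  ring

theorem norm_ggrad_ggaugeBase_rpow (hγ : 0 ≤ γ) {w : Esp m × Esp n} (hw : w ≠ 0) (b : ℝ) :
    ‖ggrad γ (fun w => ggaugeBase γ w ^ b) w‖
      = |2 * (γ + 1) * b| * ggaugeBase γ w ^ (b - 1 / 2) * normSqFst w ^ (γ / 2) := by
  set A := 2 * (γ + 1) * b
  set s := ggaugeBase γ w
  set q := normSqFst w
  have hs : 0 < s := ggaugeBase_pos (by linarith) hw
  have hq : 0 ≤ q := normSqFst_nonneg w
  have hsq_s : (s ^ (b - 1 / 2)) ^ 2 = (s ^ (b - 1)) ^ 2 * s := by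
    rw [← rpow_natCast, ← rpow_natCast, ← rpow_mul hs.le, ← rpow_mul hs.le, ← rpow_add_one hs.ne']
    norm_num; ring_nf
  have hsq_q : (q ^ (γ / 2)) ^ 2 = q ^ γ := by
    rw [← rpow_natCast, ← rpow_mul hq]; norm_num
  have hq_succ : q ^ (γ + 1) = q ^ γ * q := rpow_add_one' hq (by linarith)
  have hs_def : s = q ^ (γ + 1) + (γ + 1) ^ 2 * normSqSnd w := rfl
  have hsum : ∑ i, (ggrad γ (fun w => ggaugeBase γ w ^ b) w i) ^ 2
      = (A * s ^ (b - 1) * q ^ γ) ^ 2 * q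
        + ((γ + 1) * A * s ^ (b - 1) * q ^ (γ / 2)) ^ 2 * normSqSnd w := by
    simp only [ggrad, toE, Fintype.sum_sum_type, Xop_inl_ggaugeBase_rpow hγ hw,
      Xop_inr_ggaugeBase_rpow hγ hw]
    simp only [mul_pow _ (w.1 _), mul_pow _ (w.2 _), ← Finset.mul_sum,
      ← EuclideanSpace.real_norm_sq_eq]
    simp only [A, q, normSqFst, normSqSnd]
    ring
  have hnonneg : 0 ≤ |A| * s ^ (b - 1 / 2) * q ^ (γ / 2) := by positivity
  rw [EuclideanSpace.norm_eq, ← sqrt_sq hnonneg]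
  congr 1
  have hrhs : (|A| * s ^ (b - 1 / 2) * q ^ (γ / 2)) ^ 2 = A ^ 2 * (s ^ (b - 1)) ^ 2 * s * q ^ γ := by
    rw [mul_pow, mul_pow, sq_abs, hsq_s, hsq_q]; ring
  simp only [norm_eq_abs, sq_abs, hsum, hrhs]
  linear_combination ((γ + 1) ^ 2 * A ^ 2 * (s ^ (b - 1)) ^ 2 * normSqSnd w) * hsq_q
    - (A ^ 2 * (s ^ (b - 1)) ^ 2 * q ^ γ) * (hq_succ + hs_def)

theorem norm_ggrad_ggaugeBase_rpow_rpow (hγ : 0 ≤ γ) {w : Esp m × Esp n} (hw : w ≠ 0)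
    (b r : ℝ) :
    ‖ggrad γ (fun w => ggaugeBase γ w ^ b) w‖ ^ r
      = |2 * (γ + 1) * b| ^ r * ggaugeBase γ w ^ ((b - 1 / 2) * r)
        * normSqFst w ^ (γ / 2 * r) := by
  have hs := (ggaugeBase_pos (by linarith) hw).le
  have hq := normSqFst_nonneg w
  rw [norm_ggrad_ggaugeBase_rpow hγ hw, mul_rpow (by positivity) (by positivity),
    mul_rpow (by positivity) (by positivity), rpow_mul hs, rpow_mul hq]

theorem flux_inl_ggaugeBase_rpow (hγ : 0 < γ) {p : ℝ} (hp : 0 < p) {w : Esp m × Esp n}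
    (hw : w ≠ 0) (b : ℝ) (i : Fin m) :
    ‖ggrad γ (fun w => ggaugeBase γ w ^ b) w‖ ^ (p - 2)
        * Xop γ (.inl i) (fun w => ggaugeBase γ w ^ b) w
      = |2 * (γ + 1) * b| ^ (p - 2) * (2 * (γ + 1) * b) * ggaugeBase γ w ^ (b * (p - 1) - p / 2)
        * normSqFst w ^ (γ * p / 2) * w.1 i := by
  have hs := ggaugeBase_pos (γ := γ) (by linarith) hw
  rw [norm_ggrad_ggaugeBase_rpow_rpow hγ.le hw, Xop_inl_ggaugeBase_rpow hγ.le hw,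
    show b * (p - 1) - p / 2 = (b - 1 / 2) * (p - 2) + (b - 1) by ring, rpow_add hs,
    show γ * p / 2 = γ / 2 * (p - 2) + γ by ring,
    rpow_add' (normSqFst_nonneg w) (by ring_nf; positivity)]
  ring

theorem flux_inr_ggaugeBase_rpow (hγ : 0 < γ) {p : ℝ} (hp : 1 < p) {w : Esp m × Esp n}
    (hw : w ≠ 0) (b : ℝ) (j : Fin n) :
    ‖ggrad γ (fun w => ggaugeBase γ w ^ b) w‖ ^ (p - 2)
        * Xop γ (.inr j) (fun w => ggaugeBase γ w ^ b) w
      = (γ + 1) * |2 * (γ + 1) * b| ^ (p - 2) * (2 * (γ + 1) * b)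
        * ggaugeBase γ w ^ (b * (p - 1) - p / 2) * normSqFst w ^ (γ * (p - 1) / 2) * w.2 j := by
  have hs := ggaugeBase_pos (γ := γ) (by linarith) hw
  have hexp : γ * (p - 1) / 2 = γ / 2 * (p - 2) + γ / 2 := by ring
  have hexp_pos : 0 < γ * (p - 1) / 2 := by
    have := sub_pos.mpr hp
    positivity
  rw [norm_ggrad_ggaugeBase_rpow_rpow hγ.le hw, Xop_inr_ggaugeBase_rpow hγ.le hw,
    show b * (p - 1) - p / 2 = (b - 1 / 2) * (p - 2) + (b - 1) by ring, rpow_add hs,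
    hexp, rpow_add' (normSqFst_nonneg w) (hexp ▸ hexp_pos.ne')]
  ring

theorem sum_fderiv_flux_fst (hγ : 0 ≤ γ) {z : Esp m × Esp n} (hz : z ≠ 0) (hz1 : z.1 ≠ 0)
    (c a e : ℝ) :
    ∑ i, fderiv ℝ (fun w => c * ggaugeBase γ w ^ a * normSqFst w ^ e * w.1 i) z
        (EuclideanSpace.single i 1, 0)
      = c * ggaugeBase γ z ^ (a - 1) * normSqFst z ^ e
        * ((m + 2 * e) * ggaugeBase γ z + 2 * (γ + 1) * a * normSqFst z ^ (γ + 1)) := by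
  have hφ := ((hasFDerivAt_ggaugeBase_rpow hγ hz a).const_mul c).mul
    (hasFDerivAt_normSqFst_rpow hz1 e)
  have hs := ggaugeBase_pos (γ := γ) (by linarith) hz
  have hq : 0 < normSqFst z := by unfold normSqFst; positivity
  have hSa : ggaugeBase γ z ^ a = ggaugeBase γ z ^ (a - 1) * ggaugeBase γ z := by
    rw [← rpow_add_one hs.ne']; ring_nf
  have hqe : normSqFst z ^ e = normSqFst z ^ (e - 1) * normSqFst z := by
    rw [← rpow_add_one hq.ne']; ring_nf
  have hqγ : normSqFst z ^ (γ + 1) = normSqFst z ^ γ * normSqFst z := rpow_add_one hq.ne' γ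
  rw [sum_fderiv_mul_fst_apply (φ := fun w => c * ggaugeBase γ w ^ a * normSqFst w ^ e) hφ]
  simp only [add_apply, smul_apply, smul_eq_mul, Fintype.card_fin,
    ggaugeBaseDeriv_apply, normSqFstDeriv_apply, real_inner_self_eq_norm_sq, inner_zero_right]
  rw [show ‖z.1‖ ^ 2 = normSqFst z from rfl]
  set S := ggaugeBase γ z
  set q := normSqFst z
  linear_combination (m * c * q ^ e + 2 * e * c * q ^ (e - 1) * q) * hSa
    - 2 * e * c * S ^ (a - 1) * S * hqe - 2 * a * c * (γ + 1) * S ^ (a - 1) * q ^ e * hqγ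

theorem sum_fderiv_flux_snd (hγ : 0 ≤ γ) {z : Esp m × Esp n} (hz : z ≠ 0) (hz1 : z.1 ≠ 0)
    (c a e : ℝ) :
    ∑ j, fderiv ℝ (fun w => c * ggaugeBase γ w ^ a * normSqFst w ^ e * w.2 j) z
        (0, EuclideanSpace.single j 1)
      = c * ggaugeBase γ z ^ (a - 1) * normSqFst z ^ e
        * (n * ggaugeBase γ z + 2 * (γ + 1) ^ 2 * a * normSqSnd z) := by
  have hφ := ((hasFDerivAt_ggaugeBase_rpow hγ hz a).const_mul c).mul
    (hasFDerivAt_normSqFst_rpow hz1 e)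
  have hs := ggaugeBase_pos (γ := γ) (by linarith) hz
  have hSa : ggaugeBase γ z ^ a = ggaugeBase γ z ^ (a - 1) * ggaugeBase γ z := by
    rw [← rpow_add_one hs.ne']; ring_nf
  rw [sum_fderiv_mul_snd_apply (φ := fun w => c * ggaugeBase γ w ^ a * normSqFst w ^ e) hφ]
  simp only [add_apply, smul_apply, smul_eq_mul, Fintype.card_fin,
    ggaugeBaseDeriv_apply, normSqFstDeriv_apply, real_inner_self_eq_norm_sq, inner_zero_right]
  rw [show ‖z.2‖ ^ 2 = normSqSnd z from rfl, hSa]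
  ring

theorem fderiv_flux_fst_eq_zero (hγ : 0 ≤ γ) {z : Esp m × Esp n} (hz : z ≠ 0) (hz1 : z.1 = 0)
    (c a : ℝ) {e : ℝ} (he : 0 < e) (i : Fin m) :
    fderiv ℝ (fun w => c * ggaugeBase γ w ^ a * normSqFst w ^ e * w.1 i) z = 0 := by
  have hs := ggaugeBase_pos (γ := γ) (by linarith) hz
  have hcont : ContinuousAt (fun w => c * ggaugeBase γ w ^ a * normSqFst w ^ e) z :=
    (continuousAt_const.mul ((hasFDerivAt_ggaugeBase hγ z).continuousAt.rpow_const
      (Or.inl hs.ne'))).mul ((hasFDerivAt_normSqFst z).continuousAt.rpow_const (Or.inr he.le))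
  have hzero : c * ggaugeBase γ z ^ a * normSqFst z ^ e = 0 := by
    simp [normSqFst, hz1, zero_rpow he.ne']
  have hcoord : HasFDerivAt (fun w : Esp m × Esp n => w.1 i)
      ((EuclideanSpace.proj (𝕜 := ℝ) i).comp (ContinuousLinearMap.fst ℝ _ _)) z :=
    (EuclideanSpace.proj (𝕜 := ℝ) i).hasFDerivAt.comp z hasFDerivAt_fst
  exact (hasFDerivAt_mul_zero_of_tendsto_zero (hzero ▸ hcont.tendsto) hcoord
    (by simp [hz1])).fderiv

theorem pLap_ggaugeBase_rpow_eq_sum (hγ : 0 < γ) {p : ℝ} (hp : 1 < p) (b : ℝ)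
    {z : Esp m × Esp n} (hz : z ≠ 0) :
    pLap γ p (fun w => ggaugeBase γ w ^ b) z
      = ∑ i, fderiv ℝ (fun w => |2 * (γ + 1) * b| ^ (p - 2) * (2 * (γ + 1) * b)
            * ggaugeBase γ w ^ (b * (p - 1) - p / 2) * normSqFst w ^ (γ * p / 2) * w.1 i) z
            (EuclideanSpace.single i 1, 0)
        + ‖z.1‖ ^ γ * ∑ j, fderiv ℝ (fun w => (γ + 1) * |2 * (γ + 1) * b| ^ (p - 2)
            * (2 * (γ + 1) * b) * ggaugeBase γ w ^ (b * (p - 1) - p / 2)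
            * normSqFst w ^ (γ * (p - 1) / 2) * w.2 j) z (0, EuclideanSpace.single j 1) := by
  have hflux_fst (i : Fin m) := (eventually_ne_nhds hz).mono fun w hw =>
    flux_inl_ggaugeBase_rpow hγ (by linarith) hw b i
  have hflux_snd (j : Fin n) := (eventually_ne_nhds hz).mono fun w hw =>
    flux_inr_ggaugeBase_rpow hγ hp hw b j
  rw [pLap, Fintype.sum_sum_type, Finset.mul_sum]
  congr 1 <;> refine Finset.sum_congr rfl fun i _ => ?_
  · show fderiv ℝ _ z _ = _
    rw [Filter.EventuallyEq.fderiv_eq (hflux_fst i)]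
  · show ‖z.1‖ ^ γ * fderiv ℝ _ z _ = _
    rw [Filter.EventuallyEq.fderiv_eq (hflux_snd i)]

theorem pLap_ggaugeBase_rpow (hγ : 0 < γ) {p : ℝ} (hp : 1 < p) (b : ℝ)
    {z : Esp m × Esp n} (hz : z ≠ 0) :
    pLap γ p (fun w => ggaugeBase γ w ^ b) z
      = |2 * (γ + 1) * b| ^ (p - 2) * (2 * (γ + 1) * b)
        * ggaugeBase γ z ^ (b * (p - 1) - p / 2) * normSqFst z ^ (γ * p / 2)
        * (m + (γ + 1) * n - p + 2 * (γ + 1) * (p - 1) * b) := by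
  have he : 0 < γ * p / 2 := by
    have := zero_lt_one.trans hp
    positivity
  rw [pLap_ggaugeBase_rpow_eq_sum hγ hp b hz]
  rcases eq_or_ne z.1 0 with hz1 | hz1
  -- The `x`-flux vanishes to order `γ p > 0` at `x = 0`, and every `y`-field carries `‖x‖ ^ γ`.
  · have hq : normSqFst z = 0 := by simp [normSqFst, hz1]
    simp only [fderiv_flux_fst_eq_zero hγ.le hz hz1 _ _ he, hz1, hq, norm_zero, zero_rpow hγ.ne',
      zero_rpow he.ne', zero_apply, Finset.sum_const_zero, zero_mul, mul_zero, zero_add]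
  · rw [sum_fderiv_flux_fst hγ.le hz hz1, sum_fderiv_flux_snd hγ.le hz hz1, norm_fst_rpow]
    have hS_pos := ggaugeBase_pos (γ := γ) (by linarith) hz
    have hq_pos : 0 < normSqFst z := by unfold normSqFst; positivity
    set C := |2 * (γ + 1) * b| ^ (p - 2) * (2 * (γ + 1) * b)
    set a := b * (p - 1) - p / 2
    set S := ggaugeBase γ z
    set q := normSqFst z
    have hS : S = q ^ (γ + 1) + (γ + 1) ^ 2 * normSqSnd z := rfl
    have hSa : S ^ a = S ^ (a - 1) * S := by
      rw [← rpow_add_one hS_pos.ne']; ring_nf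
    have hq : q ^ (γ / 2) * q ^ (γ * (p - 1) / 2) = q ^ (γ * p / 2) := by
      rw [← rpow_add hq_pos]; ring_nf
    linear_combination
      (γ + 1) * C * S ^ (a - 1) * (n * S + 2 * (γ + 1) ^ 2 * a * normSqSnd z) * hq
      - 2 * (γ + 1) * a * C * S ^ (a - 1) * q ^ (γ * p / 2) * hS
      - C * q ^ (γ * p / 2) * (m + (γ + 1) * n - p + 2 * (γ + 1) * (p - 1) * b) * hSa

end Grushin

open Grushin in
theorem pLap_fundamental_solution_general (m n : ℕ)
    (γ p : ℝ) (hγ : 0 < γ) (hp : 1 < p)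
    (Nγ : ℝ) (hNγ : Nγ = (m : ℝ) + (1 + γ) * n)
    (z : Esp m × Esp n) (hz : z ≠ 0) :
    pLap γ p (fun w => ggauge γ w ^ ((p - Nγ) / (p - 1))) z = 0 := by
  have hp1 : p - 1 ≠ 0 := by linarith
  have hγ1 : γ + 1 ≠ 0 := by linarith
  have hcoeff : (m : ℝ) + (γ + 1) * n - p
      + 2 * (γ + 1) * (p - 1) * ((p - Nγ) / (p - 1) / (2 * (γ + 1))) = 0 := by
    field_simp
    linarith
  simp only [ggauge_rpow]
  rw [pLap_ggaugeBase_rpow hγ hp _ hz, hcoeff, mul_zero]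

theorem pLap_fundamental_solution (m n : ℕ) (hm : 1 ≤ m) (hn : 1 ≤ n)
    (γ p : ℝ) (hγ : 0 < γ) (hp : 1 < p)
    (Nγ : ℝ) (hNγ : Nγ = (m : ℝ) + (1 + γ) * n) (hpN : p < Nγ) (hne : p ≠ Nγ)
    (z : Esp m × Esp n) (hz : z ≠ 0) :
    pLap γ p (fun w => ggauge γ w ^ ((p - Nγ) / (p - 1))) z = 0 :=
  pLap_fundamental_solution_general m n γ p hγ hp Nγ hNγ z hz
end
end

section
/- Let ν be a positive finite Borel measure on ℝ^N with total mass ‖ν‖ > 0 such that ν(Ω)^{1/p*_γ} · ν(ℝ^N)^{1/N_γ} ≤ ν(Ω)^{1/p} for every open set Ω ⊆ ℝ^N, where 1/p = 1/p*_γ + 1/N_γ. Then ν is concentrated at a single point, i.e., there exists z₀ such that ν = ‖ν‖ δ_{z₀}. -/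
/-!
Cancelling `ν(Ω)^{1/p*}` in `ν(Ω)^{1/p*} ν(ℝ^N)^{1/N} ≤ ν(Ω)^{1/p*} ν(Ω)^{1/N}` shows that every
open set of positive measure carries the full mass. Two distinct points have disjoint open
neighbourhoods, which cannot both carry the full mass, so the support of `ν` has at most one point;
since the support is conull, `ν` is a multiple of the Dirac mass at that point.
-/

open MeasureTheory Set

namespace ENNReal

theorem le_of_rpow_mul_rpow_le_rpow_add {a b : ℝ≥0∞} {s t : ℝ} (ha : a ≠ 0) (ha' : a ≠ ⊤)
    (hs : 0 < s) (h : a ^ t * b ^ s ≤ a ^ (t + s)) : b ≤ a := by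
  rw [rpow_add _ _ ha ha'] at h
  have hbs : b ^ s ≤ a ^ s :=
    (ENNReal.mul_le_mul_iff_right (rpow_pos (pos_iff_ne_zero.2 ha) ha').ne'
      (rpow_ne_top_of_ne_zero ha ha')).1 h
  exact (rpow_le_rpow_iff hs).1 hbs

end ENNReal

namespace MeasureTheory.Measure

variable {X : Type*} [TopologicalSpace X] [MeasurableSpace X] {μ : Measure X}

theorem support_subsingleton_of_forall_isOpen [T2Space X] [OpensMeasurableSpace X]
    [IsFiniteMeasure μ] (h : ∀ U : Set X, IsOpen U → μ U ≠ 0 → μ U = μ univ) :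
    μ.support.Subsingleton := by
  intro x hx y hy
  by_contra hxy
  obtain ⟨U, V, hU, hV, hxU, hyV, hUV⟩ := t2_separation hxy
  have hUpos : 0 < μ U := (mem_support_iff_forall x).1 hx U (hU.mem_nhds hxU)
  have hVpos : 0 < μ V := (mem_support_iff_forall y).1 hy V (hV.mem_nhds hyV)
  have hUfull : μ U = μ univ := h U hU hUpos.ne'
  have hVfull : μ V = μ univ := h V hV hVpos.ne'
  have hμ : μ univ ≠ 0 := hUfull ▸ hUpos.ne'
  have : μ univ + μ univ ≤ μ univ := calc
    μ univ + μ univ = μ (U ∪ V) := by rw [measure_union hUV hV.measurableSet, hUfull, hVfull]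
    _ ≤ μ univ := measure_mono (subset_univ _)
  exact (ENNReal.lt_add_right (measure_ne_top μ univ) hμ).not_ge this

theorem exists_eq_smul_dirac_of_support_subsingleton [HereditarilyLindelofSpace X]
    [MeasurableSingletonClass X] [Nonempty X] (h : μ.support.Subsingleton) :
    ∃ x, μ = μ univ • dirac x := by
  rcases h.eq_empty_or_singleton with hempty | ⟨x, hx⟩
  · obtain rfl : μ = 0 := support_eq_empty_iff.1 hempty
    exact ⟨Classical.arbitrary X, by simp⟩
  · have hrestrict : μ.restrict {x} = μ := restrict_eq_self_of_ae_mem (hx ▸ support_mem_ae)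
    refine ⟨x, ?_⟩
    calc μ = μ {x} • dirac x := by rw [← restrict_singleton, hrestrict]
      _ = μ univ • dirac x := by rw [← restrict_apply_univ, hrestrict]

end MeasureTheory.Measure

theorem measure_concentrated_at_point_general (N : ℕ) (p Nγ pst : ℝ) (hp : 1 < p) (hpN : p < Nγ)
    (hrel : 1 / p = 1 / pst + 1 / Nγ)
    (ν : Measure (EuclideanSpace ℝ (Fin N))) [IsFiniteMeasure ν]
    (h : ∀ Ω : Set (EuclideanSpace ℝ (Fin N)), IsOpen Ω →
      (ν Ω) ^ (1 / pst) * (ν Set.univ) ^ (1 / Nγ) ≤ (ν Ω) ^ (1 / p)) :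
    ∃ z₀, ν = (ν Set.univ) • Measure.dirac z₀ := by
  have hNγ : 0 < 1 / Nγ := one_div_pos.2 (by linarith)
  have hfull : ∀ Ω : Set (EuclideanSpace ℝ (Fin N)), IsOpen Ω → ν Ω ≠ 0 → ν Ω = ν Set.univ :=
    fun Ω hΩ hne ↦ le_antisymm (measure_mono (subset_univ Ω))
      (ENNReal.le_of_rpow_mul_rpow_le_rpow_add hne (measure_ne_top ν Ω) hNγ (hrel ▸ h Ω hΩ))
  exact Measure.exists_eq_smul_dirac_of_support_subsingleton
    (Measure.support_subsingleton_of_forall_isOpen hfull)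

theorem measure_concentrated_at_point (N : ℕ) (p Nγ pst : ℝ) (hp : 1 < p) (hpN : p < Nγ)
    (hpst : pst = p * Nγ / (Nγ - p)) (hrel : 1 / p = 1 / pst + 1 / Nγ)
    (ν : Measure (EuclideanSpace ℝ (Fin N))) [IsFiniteMeasure ν]
    (hν0 : ν Set.univ ≠ 0)
    (h : ∀ Ω : Set (EuclideanSpace ℝ (Fin N)), IsOpen Ω →
      (ν Ω) ^ (1 / pst) * (ν Set.univ) ^ (1 / Nγ) ≤ (ν Ω) ^ (1 / p)) :
    ∃ z₀, ν = (ν Set.univ) • Measure.dirac z₀ :=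
  measure_concentrated_at_point_general N p Nγ pst hp hpN hrel ν h
end

section
/- (Elementary inequality for comparison principle, case p ≥ 2.) For any two positive weakly differentiable functions u, v on a domain Ω (differentiability with respect to the Grushin gradient ∇_γ), one has pointwise: |∇_γ u|^{p−2}∇_γ u·∇_γ(u − v^p u^{1−p}) + |∇_γ v|^{p−2}∇_γ v·∇_γ(v − u^p v^{1−p}) ≥ C_p (u^p + v^p)|∇_γ log u − ∇_γ log v|^p, for a constant C_p > 0 depending only on p. -/
open MeasureTheory Real Filter Topology

noncomputable section

/-! Write `ξ = ∇_γ log u` and `η = ∇_γ log v`. By the chain rule `∇_γ u = u ξ` and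
`∇_γ (u - vᵖ u¹⁻ᵖ) = u¹⁻ᵖ (uᵖ ξ + vᵖ ((p - 1) ξ - p η))`, so the left-hand side equals
`uᵖ (|ξ|ᵖ + (p - 1)|η|ᵖ - p|η|ᵖ⁻²⟨η, ξ⟩) + vᵖ (the same with ξ and η exchanged)`.
Each bracket is at least `2¹⁻ᵖ |ξ - η|ᵖ`: compare the tangent inequality of the convex function
`|·|ᵖ` at `η`, evaluated at the midpoint `(ξ + η)/2`, with Clarkson's inequality
`|(ξ + η)/2|ᵖ + |(ξ - η)/2|ᵖ ≤ (|ξ|ᵖ + |η|ᵖ)/2`, valid for `p ≥ 2`. -/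

open scoped RealInnerProductSpace

lemma Real.rpow_sub_two_mul_sq {t : ℝ} (ht : 0 ≤ t) {p : ℝ} (hp : p ≠ 0) :
    t ^ (p - 2) * t ^ 2 = t ^ p := by
  rw [← Real.rpow_natCast, ← Real.rpow_add' ht (by simpa using hp)]
  norm_num

lemma Real.rpow_sub_two_mul_self {t : ℝ} (ht : 0 ≤ t) {p : ℝ} (hp : p ≠ 1) :
    t ^ (p - 2) * t = t ^ (p - 1) := by
  rw [show p - 1 = (p - 2) + 1 by ring, Real.rpow_add' ht (by intro h; apply hp; linarith),
    Real.rpow_one]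

lemma Real.mul_mul_rpow_sub_one_le {p x y : ℝ} (hp : 1 < p) (hx : 0 ≤ x) (hy : 0 ≤ y) :
    p * (x * y ^ (p - 1)) ≤ x ^ p + (p - 1) * y ^ p := by
  have hp0 : 0 < p := by linarith
  have h := Real.geom_mean_le_arith_mean2_weighted (w₁ := 1 / p) (w₂ := 1 - 1 / p)
    (by positivity) (by rw [sub_nonneg, div_le_one hp0]; linarith)
    (Real.rpow_nonneg hx p) (Real.rpow_nonneg hy p) (by ring)
  rw [← Real.rpow_mul hx, ← Real.rpow_mul hy, mul_one_div_cancel hp0.ne', Real.rpow_one,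
    show p * (1 - 1 / p) = p - 1 by field_simp] at h
  calc p * (x * y ^ (p - 1)) ≤ p * (1 / p * x ^ p + (1 - 1 / p) * y ^ p) := by gcongr
    _ = x ^ p + (p - 1) * y ^ p := by field_simp

section InnerProductSpace

variable {E : Type*} [NormedAddCommGroup E] [InnerProductSpace ℝ E]

lemma rpow_norm_add_mul_inner_sub_le {p : ℝ} (hp : 1 < p) (a b : E) :
    ‖b‖ ^ p + p * ‖b‖ ^ (p - 2) * ⟪b, a - b⟫ ≤ ‖a‖ ^ p := by
  have hb := norm_nonneg b
  have hcs : ‖b‖ ^ (p - 2) * ⟪b, a⟫ ≤ ‖a‖ * ‖b‖ ^ (p - 1) := by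
    calc ‖b‖ ^ (p - 2) * ⟪b, a⟫ ≤ ‖b‖ ^ (p - 2) * (‖b‖ * ‖a‖) := by
          gcongr; exact real_inner_le_norm b a
      _ = ‖a‖ * ‖b‖ ^ (p - 1) := by
          rw [← Real.rpow_sub_two_mul_self hb hp.ne']; ring
  have hyoung := Real.mul_mul_rpow_sub_one_le hp (norm_nonneg a) hb
  have hb2 := Real.rpow_sub_two_mul_sq hb (by positivity : p ≠ 0)
  rw [inner_sub_right, real_inner_self_eq_norm_sq]
  nlinarith

lemma rpow_norm_half_add_add_rpow_norm_half_sub_le {p : ℝ} (hp : 2 ≤ p) (x y : E) :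
    ‖(2 : ℝ)⁻¹ • (x + y)‖ ^ p + ‖(2 : ℝ)⁻¹ • (x - y)‖ ^ p ≤ (‖x‖ ^ p + ‖y‖ ^ p) / 2 := by
  have hsq : ∀ w : E, ‖w‖ ^ p = (‖w‖ ^ 2) ^ (p / 2) := fun w => by
    rw [Real.rpow_div_two_eq_sqrt _ (by positivity), Real.sqrt_sq (norm_nonneg w)]
  have hpar : ‖(2 : ℝ)⁻¹ • (x + y)‖ ^ 2 + ‖(2 : ℝ)⁻¹ • (x - y)‖ ^ 2
      = (2 : ℝ)⁻¹ * ‖x‖ ^ 2 + (2 : ℝ)⁻¹ * ‖y‖ ^ 2 := by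
    simp only [norm_smul, norm_inv, Real.norm_ofNat, mul_pow, ← mul_add,
      parallelogram_law_with_norm ℝ x y]
    ring
  have hq : 1 ≤ p / 2 := by linarith
  simp only [hsq]
  calc _ ≤ (‖(2 : ℝ)⁻¹ • (x + y)‖ ^ 2 + ‖(2 : ℝ)⁻¹ • (x - y)‖ ^ 2) ^ (p / 2) :=
        Real.add_rpow_le_rpow_add (by positivity) (by positivity) hq
    _ ≤ (2 : ℝ)⁻¹ * (‖x‖ ^ 2) ^ (p / 2) + (2 : ℝ)⁻¹ * (‖y‖ ^ 2) ^ (p / 2) := by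
        rw [hpar]
        exact (convexOn_rpow hq).2 (Set.mem_Ici.2 (by positivity)) (Set.mem_Ici.2 (by positivity))
          (by norm_num) (by norm_num) (by norm_num)
    _ = _ := by ring

lemma two_rpow_one_sub_mul_rpow_norm_sub_le {p : ℝ} (hp : 2 ≤ p) (ξ η : E) :
    2 ^ (1 - p) * ‖ξ - η‖ ^ p ≤ ‖ξ‖ ^ p + (p - 1) * ‖η‖ ^ p - p * ‖η‖ ^ (p - 2) * ⟪η, ξ⟫ := by
  have htangent := rpow_norm_add_mul_inner_sub_le (by linarith) ((2 : ℝ)⁻¹ • (ξ + η)) η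
  have hclarkson := rpow_norm_half_add_add_rpow_norm_half_sub_le hp ξ η
  have hmid : (2 : ℝ)⁻¹ • (ξ + η) - η = (2 : ℝ)⁻¹ • (ξ - η) := by module
  have hhalf : ‖(2 : ℝ)⁻¹ • (ξ - η)‖ ^ p = 2 ^ (-p) * ‖ξ - η‖ ^ p := by
    rw [norm_smul, Real.mul_rpow (norm_nonneg _) (norm_nonneg _), norm_inv, Real.norm_ofNat,
      Real.inv_rpow (by norm_num), Real.rpow_neg (by norm_num)]
  have htwo : (2 : ℝ) ^ (1 - p) = 2 * 2 ^ (-p) := by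
    rw [sub_eq_add_neg, Real.rpow_add (by norm_num), Real.rpow_one]
  rw [hmid, real_inner_smul_right, inner_sub_right, real_inner_self_eq_norm_sq] at htangent
  have hη := Real.rpow_sub_two_mul_sq (norm_nonneg η) (by positivity : p ≠ 0)
  rw [htwo]
  nlinarith

lemma rpow_norm_sub_two_mul_inner_smul_add_smul {p : ℝ} (hp : p ≠ 0) (s t : ℝ) (ξ η : E) :
    ‖ξ‖ ^ (p - 2) * ⟪ξ, s • ξ + t • ((p - 1) • ξ - p • η)⟫
      = s * ‖ξ‖ ^ p + t * ((p - 1) * ‖ξ‖ ^ p - p * ‖ξ‖ ^ (p - 2) * ⟪ξ, η⟫) := by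
  simp only [inner_add_right, inner_sub_right, real_inner_smul_right, real_inner_self_eq_norm_sq]
  rw [← Real.rpow_sub_two_mul_sq (norm_nonneg ξ) hp]
  ring

lemma two_rpow_one_sub_mul_add_mul_rpow_norm_sub_le {p s t : ℝ} (hp : 2 ≤ p) (hs : 0 ≤ s)
    (ht : 0 ≤ t) (ξ η : E) :
    2 ^ (1 - p) * (s + t) * ‖ξ - η‖ ^ p
      ≤ ‖ξ‖ ^ (p - 2) * ⟪ξ, s • ξ + t • ((p - 1) • ξ - p • η)⟫
        + ‖η‖ ^ (p - 2) * ⟪η, t • η + s • ((p - 1) • η - p • ξ)⟫ := by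
  have hp0 : p ≠ 0 := by positivity
  have hξη := mul_le_mul_of_nonneg_left (two_rpow_one_sub_mul_rpow_norm_sub_le hp ξ η) hs
  have hηξ := mul_le_mul_of_nonneg_left (two_rpow_one_sub_mul_rpow_norm_sub_le hp η ξ) ht
  rw [norm_sub_rev η ξ] at hηξ
  rw [rpow_norm_sub_two_mul_inner_smul_add_smul hp0, rpow_norm_sub_two_mul_inner_smul_add_smul hp0]
  linarith

lemma rpow_norm_smul_mul_inner_smul_rpow_one_sub {a : ℝ} (ha : 0 < a) (p : ℝ) (ξ w : E) :
    ‖a • ξ‖ ^ (p - 2) * ⟪a • ξ, a ^ (1 - p) • w⟫ = ‖ξ‖ ^ (p - 2) * ⟪ξ, w⟫ := by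
  have ha' : a ^ (p - 2) * a * a ^ (1 - p) = 1 := by
    rw [← Real.rpow_add_one ha.ne', ← Real.rpow_add ha, show p - 2 + 1 + (1 - p) = 0 by ring,
      Real.rpow_zero]
  rw [norm_smul, Real.norm_of_nonneg ha.le, Real.mul_rpow ha.le (norm_nonneg ξ),
    real_inner_smul_left, real_inner_smul_right]
  linear_combination (‖ξ‖ ^ (p - 2) * ⟪ξ, w⟫) * ha'

end InnerProductSpace

section FDeriv

variable {F : Type*} [NormedAddCommGroup F] [NormedSpace ℝ F] {u v : F → ℝ} {z : F}
  {U V : StrongDual ℝ F}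

lemma DifferentiableAt.hasFDerivAt_smul_fderiv_log (hu : DifferentiableAt ℝ u z) (hu0 : 0 < u z) :
    HasFDerivAt u (u z • fderiv ℝ (fun w => Real.log (u w)) z) z := by
  rw [(hu.hasFDerivAt.log hu0.ne').fderiv, smul_inv_smul₀ hu0.ne']
  exact hu.hasFDerivAt

lemma HasFDerivAt.rpow_const_of_smul (hu : HasFDerivAt u (u z • U) z) (hu0 : 0 < u z) (q : ℝ) :
    HasFDerivAt (fun w => u w ^ q) ((q * u z ^ q) • U) z := by
  convert hu.rpow_const (p := q) (Or.inl hu0.ne') using 1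
  rw [smul_smul, mul_assoc, Real.rpow_sub_one hu0.ne', div_mul_cancel₀ _ hu0.ne']

lemma HasFDerivAt.sub_rpow_mul_rpow_one_sub (hu : HasFDerivAt u (u z • U) z)
    (hv : HasFDerivAt v (v z • V) z) (hu0 : 0 < u z) (hv0 : 0 < v z) (q : ℝ) :
    HasFDerivAt (fun w => u w - v w ^ q * u w ^ (1 - q))
      (u z ^ (1 - q) • (u z ^ q • U + v z ^ q • ((q - 1) • U - q • V))) z := by
  have hprod := (hv.rpow_const_of_smul hv0 q).mul (hu.rpow_const_of_smul hu0 (1 - q))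
  refine (hu.sub hprod).congr_fderiv ?_
  have hu1 : u z • U = (u z ^ (1 - q) * u z ^ q) • U := by
    rw [← Real.rpow_add hu0, sub_add_cancel, Real.rpow_one]
  rw [hu1]
  module

end FDeriv

def ggradOfFDeriv (γ : ℝ) {m n : ℕ} (z : Esp m × Esp n) :
    StrongDual ℝ (Esp m × Esp n) →ₗ[ℝ] EuclideanSpace ℝ (Fin m ⊕ Fin n) where
  toFun L := toE (Sum.elim (fun i => L (EuclideanSpace.single i 1, 0))
    (fun j => ‖z.1‖ ^ γ * L (0, EuclideanSpace.single j 1)))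
  map_add' L L' := by
    ext (i | j) <;> simp [toE, mul_add]
  map_smul' c L := by
    ext (i | j) <;> simp [toE, mul_left_comm]

lemma ggrad_eq_ggradOfFDeriv (γ : ℝ) {m n : ℕ} (f : Esp m × Esp n → ℝ) (z : Esp m × Esp n) :
    ggrad γ f z = ggradOfFDeriv γ z (fderiv ℝ f z) := by
  ext (i | j) <;> rfl

theorem elementary_comparison_inequality_general (m n : ℕ)
    (γ p : ℝ) (hp : 2 ≤ p) :
    ∃ C > (0:ℝ), ∀ (Ω : Set (Esp m × Esp n)), IsOpen Ω →
      ∀ u v : Esp m × Esp n → ℝ,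
      (∀ z ∈ Ω, 0 < u z) → (∀ z ∈ Ω, 0 < v z) →
      (∀ z ∈ Ω, DifferentiableAt ℝ u z) → (∀ z ∈ Ω, DifferentiableAt ℝ v z) →
      ∀ z ∈ Ω,
        ‖ggrad γ u z‖ ^ (p - 2) *
          (inner ℝ (ggrad γ u z)
            (ggrad γ (fun w => u w - v w ^ p * u w ^ (1 - p)) z) : ℝ) +
        ‖ggrad γ v z‖ ^ (p - 2) *
          (inner ℝ (ggrad γ v z)
            (ggrad γ (fun w => v w - u w ^ p * v w ^ (1 - p)) z) : ℝ) ≥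
        C * (u z ^ p + v z ^ p) *
          ‖ggrad γ (fun w => Real.log (u w)) z -
            ggrad γ (fun w => Real.log (v w)) z‖ ^ p := by
  refine ⟨2 ^ (1 - p), by positivity, fun Ω _ u v hu hv hud hvd z hz => ?_⟩
  have hU := (hud z hz).hasFDerivAt_smul_fderiv_log (hu z hz)
  have hV := (hvd z hz).hasFDerivAt_smul_fderiv_log (hv z hz)
  simp only [ggrad_eq_ggradOfFDeriv, hU.fderiv, hV.fderiv,
    (hU.sub_rpow_mul_rpow_one_sub hV (hu z hz) (hv z hz) p).fderiv,
    (hV.sub_rpow_mul_rpow_one_sub hU (hv z hz) (hu z hz) p).fderiv, map_add, map_sub, map_smul]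
  rw [rpow_norm_smul_mul_inner_smul_rpow_one_sub (hu z hz),
    rpow_norm_smul_mul_inner_smul_rpow_one_sub (hv z hz)]
  exact two_rpow_one_sub_mul_add_mul_rpow_norm_sub_le hp
    (Real.rpow_nonneg (hu z hz).le p) (Real.rpow_nonneg (hv z hz).le p) _ _

theorem elementary_comparison_inequality (m n : ℕ) (hm : 1 ≤ m) (hn : 1 ≤ n)
    (γ p : ℝ) (hγ : 0 < γ) (hp : 2 ≤ p) :
    ∃ C > (0:ℝ), ∀ (Ω : Set (Esp m × Esp n)), IsOpen Ω →
      ∀ u v : Esp m × Esp n → ℝ,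
      (∀ z ∈ Ω, 0 < u z) → (∀ z ∈ Ω, 0 < v z) →
      (∀ z ∈ Ω, DifferentiableAt ℝ u z) → (∀ z ∈ Ω, DifferentiableAt ℝ v z) →
      ∀ z ∈ Ω,
        ‖ggrad γ u z‖ ^ (p - 2) *
          (inner ℝ (ggrad γ u z)
            (ggrad γ (fun w => u w - v w ^ p * u w ^ (1 - p)) z) : ℝ) +
        ‖ggrad γ v z‖ ^ (p - 2) *
          (inner ℝ (ggrad γ v z)
            (ggrad γ (fun w => v w - u w ^ p * v w ^ (1 - p)) z) : ℝ) ≥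
        C * (u z ^ p + v z ^ p) *
          ‖ggrad γ (fun w => Real.log (u w)) z -
            ggrad γ (fun w => Real.log (v w)) z‖ ^ p :=
  elementary_comparison_inequality_general m n γ p hp
end
end
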